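/- arXiv:2308.15048 — 6 statements merged into one kernel-verified Lean document; each statement's English description precedes it below -/
import Mathlib

section
/- Let μ > 0, σ > 0, r > 0, c̄ ∈ [0, μ], and γ = ((μ - c̄) + sqrt((μ - c̄)² + 2σ²r))/σ². Then the inequality c̄·γ ≤ r holds if and only if 2μc̄ ≤ σ²r. -/
theorem stmt_2 (μ σ r cbar : ℝ) (hμ : 0 < μ) (hσ : 0 < σ) (hr : 0 < r)
    (hc0 : 0 ≤ cbar) (hcμ : cbar ≤ μ)
    (γ : ℝ) (hγ : γ = ((μ - cbar) + Real.sqrt ((μ - cbar)^2 + 2*σ^2*r)) / σ^2) :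
    cbar * γ ≤ r ↔ 2*μ*cbar ≤ σ^2*r := by
  set s := Real.sqrt ((μ - cbar)^2 + 2*σ^2*r) with hsdef
  have hσ2 : (0:ℝ) < σ^2 := by positivity
  have hnn : (0:ℝ) ≤ (μ - cbar)^2 + 2*σ^2*r := by nlinarith
  have hs0 : 0 ≤ s := Real.sqrt_nonneg _
  have hs2 : s^2 = (μ - cbar)^2 + 2*σ^2*r := Real.sq_sqrt hnn
  have ha : 0 ≤ μ - cbar := by linarith
  have hsa : μ - cbar ≤ s := by nlinarith
  subst hγ
  rw [← mul_div_assoc, div_le_iff₀ hσ2]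
  constructor
  · intro h
    have h1 : 0 ≤ r * σ^2 - cbar * (μ - cbar + s) := by linarith
    have h2 : 0 ≤ cbar * s := mul_nonneg hc0 hs0
    have h3 : 0 ≤ (r * σ^2 - cbar * (μ - cbar + s)) *
        (r * σ^2 - cbar * (μ - cbar + s) + 2 * (cbar * s)) := by nlinarith
    nlinarith [mul_pos hσ2 hr, h3, hs2]
  · intro h
    have hrhs : 0 ≤ r * σ^2 - cbar * (μ - cbar) := by nlinarith
    have hsq : (cbar * s)^2 ≤ (r * σ^2 - cbar * (μ - cbar))^2 := by
      nlinarith [mul_nonneg (mul_pos hσ2 hr).le (by linarith : (0:ℝ) ≤ σ^2*r - 2*μ*cbar)]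
    have h2 : 0 ≤ cbar * s := mul_nonneg hc0 hs0
    nlinarith [hsq, hrhs, h2]
end

section
/- Let μ > 0, σ > 0, r > 0, c̄ ∈ [0, μ] with 2μc̄ ≤ σ²r, and let γ be the positive root of -(1/2)σ²y² + (μ - c̄)y + r = 0. Define g(x) = (c̄/r)(1 - e^{-γx}). Then 0 ≤ g'(x) = (c̄γ/r)e^{-γx} ≤ 1 for all x ≥ 0. -/
theorem stmt_3 (μ σ r cbar γ : ℝ) (hμ : 0 < μ) (hσ : 0 < σ) (hr : 0 < r)
    (hc0 : 0 ≤ cbar) (hcμ : cbar ≤ μ) (hsimple : 2*μ*cbar ≤ σ^2*r)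
    (hγpos : 0 < γ) (hγroot : -(1/2)*σ^2*γ^2 + (μ - cbar)*γ + r = 0)
    (g : ℝ → ℝ) (hg : ∀ x, g x = (cbar/r) * (1 - Real.exp (-γ*x))) :
    ∀ x ≥ (0:ℝ), 0 ≤ deriv g x ∧ deriv g x = (cbar*γ/r) * Real.exp (-γ*x)
      ∧ deriv g x ≤ 1 := by
  have hgfun : g = fun x => (cbar/r) * (1 - Real.exp (-γ*x)) := funext hg
  have hkey : cbar * γ ≤ r := by
    -- σ²γ ≥ 2μ
    have h2 : 2*μ ≤ σ^2*γ := by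
      nlinarith [sq_nonneg (σ^2*γ - 2*μ), mul_pos hμ hγpos, sq_nonneg σ,
        mul_pos (mul_pos hσ hσ) hγpos, mul_pos hr hγpos]
    nlinarith [mul_pos hγpos hγpos, mul_le_mul_of_nonneg_right h2 hγpos.le]
  intro x hx
  have hd : HasDerivAt g ((cbar*γ/r) * Real.exp (-γ*x)) x := by
    rw [hgfun]
    have h1 : HasDerivAt (fun y : ℝ => -γ*y) (-γ) x := by
      simpa using (hasDerivAt_id x).const_mul (-γ)
    have h2 : HasDerivAt (fun y : ℝ => Real.exp (-γ*y)) (Real.exp (-γ*x) * (-γ)) x :=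
      (Real.hasDerivAt_exp (-γ*x)).comp x h1
    have h3 := ((hasDerivAt_const x (1:ℝ)).sub h2).const_mul (cbar/r)
    refine h3.congr_deriv ?_
    ring
  have hds : deriv g x = (cbar*γ/r) * Real.exp (-γ*x) := hd.deriv
  have hexp : Real.exp (-γ*x) ≤ 1 := by
    rw [Real.exp_le_one_iff]
    nlinarith
  have hcoef : 0 ≤ cbar*γ/r := by positivity
  refine ⟨?_, hds, ?_⟩
  · rw [hds]; positivity
  · rw [hds]
    calc (cbar*γ/r) * Real.exp (-γ*x) ≤ (cbar*γ/r) * 1 :=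
          mul_le_mul_of_nonneg_left hexp hcoef
      _ ≤ 1 := by rw [mul_one]; exact (div_le_one hr).2 hkey
end

section
/- Let μ > 0, σ > 0, r > 0, c̄ ∈ [0, μ] with 2μc̄ ≤ σ²r, and γ the positive root of -(1/2)σ²y² + (μ - c̄)y + r = 0; set g(x) = (c̄/r)(1 - e^{-γx}). Then for every c ∈ [0, c̄] and every x ≥ 0, one has -(1/2)σ²g''(x) - (μ - c)g'(x) + r g(x) - c = (c - c̄)(g'(x) - 1) ≥ 0. -/
theorem stmt_4 (μ σ r cbar γ : ℝ) (hμ : 0 < μ) (hσ : 0 < σ) (hr : 0 < r)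
    (hc0 : 0 ≤ cbar) (hcμ : cbar ≤ μ) (hsimple : 2*μ*cbar ≤ σ^2*r)
    (hγpos : 0 < γ) (hγroot : -(1/2)*σ^2*γ^2 + (μ - cbar)*γ + r = 0)
    (g : ℝ → ℝ) (hg : ∀ x, g x = (cbar/r) * (1 - Real.exp (-γ*x))) :
    ∀ c ∈ Set.Icc (0:ℝ) cbar, ∀ x ≥ (0:ℝ),
      -(1/2)*σ^2 * deriv (deriv g) x - (μ - c) * deriv g x + r * g x - c
        = (c - cbar) * (deriv g x - 1)
      ∧ 0 ≤ (c - cbar) * (deriv g x - 1) := by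
  have hgeq : g = fun x => (cbar/r) * (1 - Real.exp (-γ*x)) := funext hg
  subst hgeq
  have hd1 : ∀ x : ℝ, HasDerivAt (fun x => (cbar/r) * (1 - Real.exp (-γ*x)))
      ((cbar/r) * (γ * Real.exp (-γ*x))) x := by
    intro x
    have h0 : HasDerivAt (fun x : ℝ => -γ * x) (-γ) x := by
      simpa using (hasDerivAt_id x).const_mul (-γ)
    have h1 := ((h0.exp).const_sub 1).const_mul (cbar/r)
    refine h1.congr_deriv ?_
    ring
  have hderiv1 : deriv (fun x => (cbar/r) * (1 - Real.exp (-γ*x)))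
      = fun x => (cbar/r) * (γ * Real.exp (-γ*x)) := by
    funext x; exact (hd1 x).deriv
  have hd2 : ∀ x : ℝ, HasDerivAt (fun x => (cbar/r) * (γ * Real.exp (-γ*x)))
      (-((cbar/r) * (γ^2 * Real.exp (-γ*x)))) x := by
    intro x
    have h0 : HasDerivAt (fun x : ℝ => -γ * x) (-γ) x := by
      simpa using (hasDerivAt_id x).const_mul (-γ)
    have h1 := ((h0.exp).const_mul γ).const_mul (cbar/r)
    refine h1.congr_deriv ?_
    ring
  have hγ2 : cbar * γ ≤ r := by
    have hz : (σ^2*γ - 2*μ) * (σ^2*γ + 2*cbar) = 2*σ^2*r - 4*μ*cbar := by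
      nlinarith [hγroot]
    have hzpos : 0 < σ^2*γ + 2*cbar := by positivity
    have h2μ : 2*μ ≤ σ^2*γ := by nlinarith
    nlinarith [sq_nonneg σ, mul_pos hγpos hγpos]
  intro c hc x hx
  have hcc : c ≤ cbar := hc.2
  have hexp : Real.exp (-γ*x) ≤ 1 := by
    rw [Real.exp_le_one_iff]
    nlinarith
  have hexp0 : 0 < Real.exp (-γ*x) := Real.exp_pos _
  rw [hderiv1, (hd2 x).deriv]
  have hg'le : (cbar/r) * (γ * Real.exp (-γ*x)) ≤ 1 := by
    rw [div_mul_eq_mul_div, div_le_one hr]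
    calc cbar * (γ * Real.exp (-γ*x)) ≤ cbar * (γ * 1) := by
          apply mul_le_mul_of_nonneg_left _ hc0
          exact mul_le_mul_of_nonneg_left hexp (le_of_lt hγpos)
      _ = cbar * γ := by ring
      _ ≤ r := hγ2
  constructor
  · have hrne : r ≠ 0 := ne_of_gt hr
    field_simp
    linear_combination (-(2*cbar*Real.exp (-(γ*x)))) * hγroot
  · nlinarith [mul_nonneg (sub_nonneg.2 hcc) (sub_nonneg.2 hg'le)]
end

section
/- Let μ > 0, σ > 0, r > 0 and c̄ ∈ [0, μ] with 2μc̄ > σ²r. Let γ be the positive root of -(1/2)σ²y² + (μ - c̄)y + r = 0 and g(x) = (c̄/r)(1 - e^{-γx}). Then g'(0) = c̄γ/r > 1. -/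
/-! At a root γ of the quadratic, c̄γ - r = γ(μ - σ²γ/2), so c̄γ > r amounts to σ²γ < 2μ. If instead
σ²γ ≥ 2μ, the same identity gives σ²r ≥ σ²c̄γ ≥ 2μc̄, contradicting 2μc̄ > σ²r. -/

open Real

theorem hasDerivAt_mul_one_sub_exp_neg_mul (a γ x : ℝ) :
    HasDerivAt (fun x => a * (1 - exp (-γ * x))) (a * (γ * exp (-γ * x))) x := by
  have hlin : HasDerivAt (fun x => -γ * x) (-γ) x := by
    simpa using (hasDerivAt_id x).const_mul (-γ)
  exact ((hlin.exp.const_sub 1).const_mul a).congr_deriv (by ring)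

theorem deriv_mul_one_sub_exp_neg_mul_zero (a γ : ℝ) :
    deriv (fun x => a * (1 - exp (-γ * x))) 0 = a * γ := by
  simpa using (hasDerivAt_mul_one_sub_exp_neg_mul a γ 0).deriv

section QuadraticRoot

variable {μ σ r c γ : ℝ}

theorem mul_root_sub_eq (hγ : -(1/2) * σ^2 * γ^2 + (μ - c) * γ + r = 0) :
    c * γ - r = γ * (μ - σ^2 * γ / 2) := by
  linear_combination -hγ

theorem sq_mul_root_lt (hγ : -(1/2) * σ^2 * γ^2 + (μ - c) * γ + r = 0) (hγpos : 0 < γ)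
    (hc : 0 ≤ c) (h : σ^2 * r < 2 * μ * c) : σ^2 * γ < 2 * μ := by
  by_contra! hle
  have hsub := mul_root_sub_eq hγ
  have hσγ : 0 ≤ σ^2 * γ := by positivity
  nlinarith [mul_nonneg hσγ (sub_nonneg.mpr hle), mul_le_mul_of_nonneg_right hle hc]

theorem lt_mul_root (hγ : -(1/2) * σ^2 * γ^2 + (μ - c) * γ + r = 0) (hγpos : 0 < γ)
    (hc : 0 ≤ c) (h : σ^2 * r < 2 * μ * c) : r < c * γ := by
  have hpos : 0 < γ * (μ - σ^2 * γ / 2) :=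
    mul_pos hγpos (by linarith [sq_mul_root_lt hγ hγpos hc h])
  linarith [mul_root_sub_eq hγ]

end QuadraticRoot

theorem stmt_5_general (μ σ r cbar γ : ℝ) (hr : 0 < r)
    (hc0 : 0 ≤ cbar) (hcomp : 2*μ*cbar > σ^2*r)
    (hγpos : 0 < γ) (hγroot : -(1/2)*σ^2*γ^2 + (μ - cbar)*γ + r = 0)
    (g : ℝ → ℝ) (hg : ∀ x, g x = (cbar/r) * (1 - Real.exp (-γ*x))) :
    deriv g 0 = cbar*γ/r ∧ 1 < cbar*γ/r := by
  have hg_eq : g = fun x => (cbar/r) * (1 - exp (-γ*x)) := funext hg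
  constructor
  · rw [hg_eq, deriv_mul_one_sub_exp_neg_mul_zero]
    ring
  · rw [lt_div_iff₀ hr, one_mul]
    exact lt_mul_root hγroot hγpos hc0 hcomp

theorem stmt_5 (μ σ r cbar γ : ℝ) (hμ : 0 < μ) (hσ : 0 < σ) (hr : 0 < r)
    (hc0 : 0 ≤ cbar) (hcμ : cbar ≤ μ) (hcomp : 2*μ*cbar > σ^2*r)
    (hγpos : 0 < γ) (hγroot : -(1/2)*σ^2*γ^2 + (μ - cbar)*γ + r = 0)
    (g : ℝ → ℝ) (hg : ∀ x, g x = (cbar/r) * (1 - Real.exp (-γ*x))) :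
    deriv g 0 = cbar*γ/r ∧ 1 < cbar*γ/r :=
  stmt_5_general μ σ r cbar γ hr hc0 hcomp hγpos hγroot g hg
end

section
/- Let μ > 0, σ > 0, r > 0, c̄ ∈ (0, μ] with 2μc̄ > σ²r, and let γ be the positive root of -(1/2)σ²y² + (μ - c̄)y + r = 0. Then σ²γ - μ + c̄ > 0, and the function u(x) = (1/r)(e^{-γx} - 1) + (γc̄/(r(σ²γ - μ + c̄))) · x e^{-γx} satisfies the ODE -(1/2)σ²u''(x) - (μ - c̄)u'(x) + r u(x) = (c̄γ/r)e^{-γx} - 1 for all x ≥ 0, with u(0) = 0 and lim_{x→∞} u(x) = -1/r < 0. -/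
open Real Filter Topology

/-!
The root equation gives `σ²γ = 2(μ - c̄) + 2r/γ`, whence `σ²γ - μ + c̄ = (μ - c̄) + 2r/γ > 0`.
The function `u` is of the form `(p + q x) e^{-γx} + k`, a family closed under differentiation.
Applying `L u = -½σ²u'' - (μ - c̄)u' + r u` to it, the coefficient of `x e^{-γx}` is `q` times the
characteristic polynomial at `γ`, which vanishes; what is left is `q (σ²γ - μ + c̄) e^{-γx} + r k`,
and `q` was chosen so that `q (σ²γ - μ + c̄) = c̄γ/r`.
-/

lemma sub_pos_of_char_root {s a r γ : ℝ} (hγ : 0 < γ) (hr : 0 < r) (ha : 0 ≤ a)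
    (hroot : -(1/2) * s * γ^2 + a * γ + r = 0) : 0 < s * γ - a := by
  nlinarith

noncomputable def affineMulExp (γ p q k : ℝ) (x : ℝ) : ℝ :=
  (p + q * x) * exp (-γ * x) + k

namespace affineMulExp

variable (γ p q k : ℝ)

lemma hasDerivAt (x : ℝ) :
    HasDerivAt (affineMulExp γ p q k) (affineMulExp γ (q - γ * p) (-γ * q) 0 x) x := by
  have hexp : HasDerivAt (fun y => exp (-γ * y)) (exp (-γ * x) * -γ) x := by
    simpa using ((hasDerivAt_id x).const_mul (-γ)).exp
  have hlin : HasDerivAt (fun y => p + q * y) q x := by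
    simpa using ((hasDerivAt_id x).const_mul q).const_add p
  exact ((hlin.mul hexp).add_const k).congr_deriv (by rw [affineMulExp]; ring)

lemma deriv_eq : deriv (affineMulExp γ p q k) = affineMulExp γ (q - γ * p) (-γ * q) 0 :=
  funext fun x => (hasDerivAt γ p q k x).deriv

lemma ode_of_char_root {s a r : ℝ} (hroot : -(1/2) * s * γ^2 + a * γ + r = 0) (x : ℝ) :
    -(1/2) * s * deriv (deriv (affineMulExp γ p q k)) x - a * deriv (affineMulExp γ p q k) x
        + r * affineMulExp γ p q k x
      = q * (s * γ - a) * exp (-γ * x) + r * k := by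
  simp only [deriv_eq, affineMulExp]
  linear_combination (p + q * x) * exp (-γ * x) * hroot

lemma tendsto_atTop {γ : ℝ} (hγ : 0 < γ) : Tendsto (affineMulExp γ p q k) atTop (𝓝 k) := by
  have h0 := tendsto_rpow_mul_exp_neg_mul_atTop_nhds_zero 0 γ hγ
  have h1 := tendsto_rpow_mul_exp_neg_mul_atTop_nhds_zero 1 γ hγ
  simp only [rpow_zero, one_mul, rpow_one] at h0 h1
  have := ((h0.const_mul p).add (h1.const_mul q)).add_const k
  simp only [mul_zero, add_zero, zero_add] at this
  refine this.congr fun x => ?_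
  simp only [affineMulExp]
  ring

end affineMulExp

theorem stmt_10_general (μ σ r cbar γ : ℝ) (hr : 0 < r)
    (hcμ : cbar ≤ μ)
    (hγpos : 0 < γ) (hγroot : -(1/2)*σ^2*γ^2 + (μ - cbar)*γ + r = 0)
    (u : ℝ → ℝ)
    (hu : ∀ x, u x = (1/r) * (Real.exp (-γ*x) - 1)
      + (γ*cbar/(r*(σ^2*γ - μ + cbar))) * x * Real.exp (-γ*x)) :
    0 < σ^2*γ - μ + cbar
      ∧ (∀ x ≥ (0:ℝ),
          -(1/2)*σ^2 * deriv (deriv u) x - (μ - cbar) * deriv u x + r * u x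
            = (cbar*γ/r) * Real.exp (-γ*x) - 1)
      ∧ u 0 = 0
      ∧ Filter.Tendsto u Filter.atTop (nhds (-1/r))
      ∧ -1/r < 0 := by
  have hD : 0 < σ^2*γ - μ + cbar := by
    linarith [sub_pos_of_char_root hγpos hr (sub_nonneg.2 hcμ) hγroot]
  set q := γ*cbar/(r*(σ^2*γ - μ + cbar))
  have hq : q * (σ^2*γ - (μ - cbar)) = cbar*γ/r := by
    rw [← sub_add, div_mul_eq_mul_div, div_eq_div_iff (mul_ne_zero hr.ne' hD.ne') hr.ne']
    ring
  obtain rfl : u = affineMulExp γ (1/r) q (-1/r) := by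
    funext x
    rw [hu, affineMulExp]
    ring
  refine ⟨hD, fun x _ => ?_, by simp only [affineMulExp, mul_zero, exp_zero]; ring, affineMulExp.tendsto_atTop _ _ _ hγpos,
    div_neg_of_neg_of_pos (by norm_num) hr⟩
  rw [affineMulExp.ode_of_char_root _ _ _ _ hγroot, hq]
  field_simp
  ring

theorem stmt_10 (μ σ r cbar γ : ℝ) (hμ : 0 < μ) (hσ : 0 < σ) (hr : 0 < r)
    (hc0 : 0 < cbar) (hcμ : cbar ≤ μ) (hcomp : 2*μ*cbar > σ^2*r)
    (hγpos : 0 < γ) (hγroot : -(1/2)*σ^2*γ^2 + (μ - cbar)*γ + r = 0)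
    (u : ℝ → ℝ)
    (hu : ∀ x, u x = (1/r) * (Real.exp (-γ*x) - 1)
      + (γ*cbar/(r*(σ^2*γ - μ + cbar))) * x * Real.exp (-γ*x)) :
    0 < σ^2*γ - μ + cbar
      ∧ (∀ x ≥ (0:ℝ),
          -(1/2)*σ^2 * deriv (deriv u) x - (μ - cbar) * deriv u x + r * u x
            = (cbar*γ/r) * Real.exp (-γ*x) - 1)
      ∧ u 0 = 0
      ∧ Filter.Tendsto u Filter.atTop (nhds (-1/r))
      ∧ -1/r < 0 :=
  stmt_10_general μ σ r cbar γ hr hcμ hγpos hγroot u hu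
end

section
/- Let σ > 0, μ ≥ 0, r > 0, c ∈ ℝ, a ≥ 0, and let h: [a, ∞) → ℝ be bounded with h ≥ 0. Suppose ν: [a, ∞) → ℝ is twice continuously differentiable, bounded, and satisfies: ν(a) = 0, ν(x) ≥ 0 for all x ≥ a, -(1/2)σ²ν''(x) - (μ - c)ν'(x) + rν(x) + h(x) ≥ 0 for all x ≥ a, and at every x where ν(x) > 0 the equality -(1/2)σ²ν''(x) - (μ - c)ν'(x) + rν(x) + h(x) = 0 holds. Then ν ≡ 0 on [a, ∞). -/
open Set Filter Topology

/-- Second derivative test at a local max: if `f` is differentiable near `z`, its derivative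
is differentiable at `z`, and `z` is a local max, then the second derivative is `≤ 0`. -/
lemma second_deriv_nonpos_of_isLocalMax {f : ℝ → ℝ} {z : ℝ}
    (hmax : IsLocalMax f z)
    (hev : ∀ᶠ x in 𝓝 z, DifferentiableAt ℝ f x)
    (hf' : DifferentiableAt ℝ (deriv f) z) :
    deriv (deriv f) z ≤ 0 := by
  by_contra hpos
  push_neg at hpos
  have hz0 : deriv f z = 0 := hmax.deriv_eq_zero
  have hd : HasDerivAt (deriv f) (deriv (deriv f) z) z := hf'.hasDerivAt
  have hslope := hasDerivAt_iff_tendsto_slope.mp hd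
  have hpos' : ∀ᶠ x in 𝓝[≠] z, 0 < slope (deriv f) z x :=
    hslope.eventually (lt_mem_nhds hpos)
  have hright : ∀ᶠ x in 𝓝[>] z, 0 < deriv f x := by
    have h1 : ∀ᶠ x in 𝓝[>] z, 0 < slope (deriv f) z x :=
      hpos'.filter_mono (nhdsWithin_mono z (fun x hx => ne_of_gt hx))
    have h2 : ∀ᶠ x in 𝓝[>] z, z < x := eventually_mem_nhdsWithin
    filter_upwards [h1, h2] with x hx hzx
    rw [slope_def_field, hz0, sub_zero] at hx
    have hxz : 0 < x - z := sub_pos.mpr hzx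
    have := mul_pos hx hxz
    rwa [div_mul_cancel₀ _ (ne_of_gt hxz)] at this
  have hmax' : ∀ᶠ x in 𝓝[>] z, f x ≤ f z :=
    hmax.filter_mono nhdsWithin_le_nhds
  have hev' : ∀ᶠ x in 𝓝[>] z, DifferentiableAt ℝ f x :=
    hev.filter_mono nhdsWithin_le_nhds
  have hall : ∀ᶠ x in 𝓝[>] z, f x ≤ f z ∧ DifferentiableAt ℝ f x ∧ 0 < deriv f x := by
    filter_upwards [hmax', hev', hright] with x h1 h2 h3
    exact ⟨h1, h2, h3⟩
  obtain ⟨u, hu, hsub⟩ := mem_nhdsGT_iff_exists_Ioo_subset.mp hall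
  set t := (z + u) / 2 with ht
  have hzt : z < t := by
    have : z < u := hu
    simp only [ht]; linarith
  have htu : t < u := by
    have : z < u := hu
    simp only [ht]; linarith
  have hcont : ContinuousOn f (Icc z t) := by
    intro x hx
    rcases eq_or_lt_of_le hx.1 with rfl | hlt
    · exact (hev.self_of_nhds).continuousAt.continuousWithinAt
    · exact ((hsub ⟨hlt, lt_of_le_of_lt hx.2 htu⟩).2.1).continuousAt.continuousWithinAt
  have hmono : StrictMonoOn f (Icc z t) := by
    apply strictMonoOn_of_deriv_pos (convex_Icc z t) hcont
    intro x hx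
    rw [interior_Icc] at hx
    exact (hsub ⟨hx.1, lt_trans hx.2 htu⟩).2.2
  have h1 : f z < f t := hmono (left_mem_Icc.mpr hzt.le) (right_mem_Icc.mpr hzt.le) hzt
  have h2 : f t ≤ f z := (hsub ⟨hzt, htu⟩).1
  linarith

theorem stmt_12 (σ μ r c a : ℝ) (hσ : 0 < σ) (hμ : 0 ≤ μ) (hr : 0 < r) (ha : 0 ≤ a)
    (h : ℝ → ℝ) (hhnn : ∀ x ≥ a, 0 ≤ h x) (hhbd : ∃ M, ∀ x ≥ a, |h x| ≤ M)
    (ν : ℝ → ℝ) (hν : ContDiffOn ℝ 2 ν (Set.Ici a))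
    (hνbd : ∃ M, ∀ x ≥ a, |ν x| ≤ M)
    (hνa : ν a = 0) (hνnn : ∀ x ≥ a, 0 ≤ ν x)
    (hineq : ∀ x ≥ a,
      0 ≤ -(1/2)*σ^2 * deriv (deriv ν) x - (μ - c) * deriv ν x + r * ν x + h x)
    (heq : ∀ x ≥ a, 0 < ν x →
      -(1/2)*σ^2 * deriv (deriv ν) x - (μ - c) * deriv ν x + r * ν x + h x = 0) :
    ∀ x ≥ a, ν x = 0 := by
  obtain ⟨M, hM⟩ := hνbd
  have hM0 : 0 ≤ M := le_trans (abs_nonneg _) (hM a le_rfl)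
  -- choose the exponent l
  obtain ⟨K, hK⟩ : ∃ K : ℝ, K = σ ^ 2 / 2 + |μ - c| + 1 := ⟨_, rfl⟩
  have hKpos : 0 < K := by rw [hK]; positivity
  obtain ⟨l, hl⟩ : ∃ l : ℝ, l = min 1 (r / K) := ⟨_, rfl⟩
  have hlpos : 0 < l := hl ▸ lt_min one_pos (div_pos hr hKpos)
  have hl1 : l ≤ 1 := hl ▸ min_le_left _ _
  have hlK : l * K ≤ r := by
    have : l ≤ r / K := hl ▸ min_le_right _ _
    calc l * K ≤ r / K * K := mul_le_mul_of_nonneg_right this hKpos.le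
    _ = r := div_mul_cancel₀ r (ne_of_gt hKpos)
  have hcoef : σ ^ 2 / 2 * l ^ 2 + (μ - c) * l < r := by
    have h1 : l ^ 2 ≤ l := by
      have := mul_le_mul_of_nonneg_left hl1 hlpos.le
      nlinarith
    have h2 : (μ - c) * l ≤ |μ - c| * l := by
      apply mul_le_mul_of_nonneg_right (le_abs_self _) hlpos.le
    have h3 : σ ^ 2 / 2 * l ^ 2 ≤ σ ^ 2 / 2 * l := by nlinarith
    have : σ ^ 2 / 2 * l + |μ - c| * l = l * K - l := by rw [hK]; ring
    linarith
  -- the exponential barrier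
  set φ : ℝ → ℝ := fun x => Real.exp (l * (x - a)) with hφ
  have hφpos : ∀ x, 0 < φ x := fun x => Real.exp_pos _
  have hφderiv : ∀ x, HasDerivAt φ (l * φ x) x := by
    intro x
    have h1 : HasDerivAt (fun y : ℝ => l * (y - a)) l x := by
      simpa using ((hasDerivAt_id x).sub_const a).const_mul l
    simpa [hφ, mul_comm] using h1.exp
  -- ν is differentiable on Ioi a, and deriv ν is C¹ there
  have hν2 : ContDiffOn ℝ 2 ν (Ioi a) := hν.mono Ioi_subset_Ici_self
  have hνdiff : ∀ x ∈ Ioi a, DifferentiableAt ℝ ν x := fun x hx =>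
    (hν2.contDiffAt (Ioi_mem_nhds hx)).differentiableAt (by norm_num)
  have hdν : ContDiffOn ℝ 1 (deriv ν) (Ioi a) := by
    have := hν2.deriv_of_isOpen isOpen_Ioi (m := 1) (by norm_num)
    exact this
  have hdνdiff : ∀ x ∈ Ioi a, DifferentiableAt ℝ (deriv ν) x := fun x hx =>
    (hdν.contDiffAt (Ioi_mem_nhds hx)).differentiableAt one_ne_zero
  -- key claim
  have key : ∀ ε > 0, ∀ x ≥ a, ν x ≤ ε * φ x := by
    intro ε hε
    by_contra hcon
    push_neg at hcon
    obtain ⟨x₀, hx₀a, hx₀⟩ := hcon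
    -- choose R large
    set R : ℝ := max (x₀ + 1) (a + (M / ε + 1) / l) with hR
    have hRx₀ : x₀ + 1 ≤ R := le_max_left _ _
    have hRa : a < R := by
      have : a + (M / ε + 1) / l ≤ R := le_max_right _ _
      have hp : 0 < (M / ε + 1) / l := by positivity
      linarith
    have hφR : ∀ x, R ≤ x → M < ε * φ x := by
      intro x hx
      have h1 : M / ε + 1 ≤ l * (x - a) := by
        have h2 : a + (M / ε + 1) / l ≤ R := le_max_right _ _
        have h3 : (M / ε + 1) / l ≤ x - a := by linarith
        calc M / ε + 1 = (M / ε + 1) / l * l := by field_simp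
        _ ≤ (x - a) * l := mul_le_mul_of_nonneg_right h3 hlpos.le
        _ = l * (x - a) := mul_comm _ _
      have h4 : M / ε + 2 ≤ φ x := by
        have := Real.add_one_le_exp (l * (x - a))
        simp only [hφ]; linarith
      have h5 : M / ε < φ x := by linarith
      calc M = ε * (M / ε) := by field_simp
      _ < ε * φ x := by exact mul_lt_mul_of_pos_left h5 hε
    -- w attains its max on [a, R]
    set w : ℝ → ℝ := fun x => ν x - ε * φ x with hw
    have hwcont : ContinuousOn w (Icc a R) := by
      apply ContinuousOn.sub
      · exact (hν.continuousOn.mono (fun x hx => hx.1))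
      · have hφc : Continuous φ := by
          rw [hφ]
          exact Real.continuous_exp.comp (continuous_const.mul (continuous_id.sub continuous_const))
        exact (continuous_const.mul hφc).continuousOn
    obtain ⟨z, hzmem, hzmax⟩ := isCompact_Icc.exists_isMaxOn
      (nonempty_Icc.mpr hRa.le) hwcont
    have hx₀mem : x₀ ∈ Icc a R := ⟨hx₀a, by linarith⟩
    have hwz : 0 < w z := by
      have h1 : w x₀ ≤ w z := hzmax hx₀mem
      have h2 : 0 < w x₀ := by simp only [hw]; linarith
      linarith
    have hza : a < z := by
      rcases eq_or_lt_of_le hzmem.1 with hEq | hlt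
      · exfalso
        have hwa : w z = -ε := by rw [← hEq]; simp [hw, hφ, hνa]
        rw [hwa] at hwz; linarith
      · exact hlt
    have hzR : z < R := by
      rcases eq_or_lt_of_le hzmem.2 with hEq | hlt
      · exfalso
        have h1 : ν z ≤ M := le_trans (le_abs_self _) (hM z hzmem.1)
        have h2 : M < ε * φ z := hφR z hEq.ge
        have h3 : w z < 0 := by simp only [hw]; linarith
        linarith
      · exact hlt
    -- z is a local max of w
    have hmaxIci : IsMaxOn w (Ici a) z := by
      intro x hx
      rcases le_or_gt x R with hxR | hxR
      · exact hzmax ⟨hx, hxR⟩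
      · have h1 : ν x ≤ M := le_trans (le_abs_self _) (hM x hx)
        have h2 : M < ε * φ x := hφR x hxR.le
        have : w x < 0 := by simp only [hw]; linarith
        simp only [mem_setOf_eq]
        linarith
    have hlocmax : IsLocalMax w z := hmaxIci.isLocalMax (Ici_mem_nhds hza)
    -- derivatives of w near z
    have hIoi : Ioi a ∈ 𝓝 z := Ioi_mem_nhds hza
    have hwdiff : ∀ x ∈ Ioi a, DifferentiableAt ℝ w x := by
      intro x hx
      exact (hνdiff x hx).sub ((hφderiv x).differentiableAt.const_mul ε)
    have hwderiv : ∀ x ∈ Ioi a, deriv w x = deriv ν x - ε * (l * φ x) := by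
      intro x hx
      have h1 : HasDerivAt w (deriv ν x - ε * (l * φ x)) x :=
        ((hνdiff x hx).hasDerivAt).sub ((hφderiv x).const_mul ε)
      exact h1.deriv
    have hwev : deriv w =ᶠ[𝓝 z] fun x => deriv ν x - ε * (l * φ x) := by
      filter_upwards [hIoi] with x hx using hwderiv x hx
    -- first derivative zero at z
    have hz1 : deriv ν z = ε * (l * φ z) := by
      have h0 : deriv w z = 0 := hlocmax.deriv_eq_zero
      have := hwderiv z hza
      rw [h0] at this
      linarith
    -- second derivative nonpositive at z
    have hwdiff2 : DifferentiableAt ℝ (deriv w) z := by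
      exact DifferentiableAt.congr_of_eventuallyEq
        ((hdνdiff z hza).sub (((hφderiv z).differentiableAt.const_mul l).const_mul ε)) hwev
    have hsec : deriv (deriv w) z ≤ 0 := by
      apply second_deriv_nonpos_of_isLocalMax hlocmax _ hwdiff2
      filter_upwards [hIoi] with x hx using hwdiff x hx
    have hderiv2eq : deriv (deriv w) z = deriv (deriv ν) z - ε * (l * (l * φ z)) := by
      rw [hwev.deriv_eq]
      have h1 : HasDerivAt (fun x => deriv ν x - ε * (l * φ x))
          (deriv (deriv ν) z - ε * (l * (l * φ z))) z := by
        exact ((hdνdiff z hza).hasDerivAt).sub (((hφderiv z).const_mul l).const_mul ε)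
      exact h1.deriv
    have hz2 : deriv (deriv ν) z ≤ ε * (l * (l * φ z)) := by
      rw [hderiv2eq] at hsec; linarith
    -- use the equality at z
    have hνz : 0 < ν z := by
      have : ε * φ z < ν z := by
        have := hwz; simp only [hw] at this; linarith
      exact lt_trans (by positivity) this
    have hE := heq z hza.le hνz
    have hhz := hhnn z hza.le
    have hφz := hφpos z
    have hνzφ : ε * φ z < ν z := by
      have := hwz; simp only [hw] at this; linarith
    -- derive contradiction
    have e1 : (1/2)*σ^2 * deriv (deriv ν) z ≤ (1/2)*σ^2 * (ε * (l * (l * φ z))) :=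
      mul_le_mul_of_nonneg_left hz2 (by positivity)
    have e2 : (μ - c) * deriv ν z = (μ - c) * (ε * (l * φ z)) := by rw [hz1]
    have e3 : r * ν z + h z = (1/2)*σ^2 * deriv (deriv ν) z + (μ - c) * deriv ν z := by
      linarith [hE]
    have e4 : (1/2)*σ^2 * (ε*(l*(l*φ z))) + (μ-c)*(ε*(l*φ z))
        = (σ^2/2 * l^2 + (μ-c)*l) * (ε * φ z) := by ring
    have e5 : (σ^2/2*l^2 + (μ-c)*l) * (ε*φ z) < r * (ε*φ z) :=
      mul_lt_mul_of_pos_right hcoef (by positivity)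
    have e6 : r * (ε*φ z) < r * ν z := mul_lt_mul_of_pos_left hνzφ hr
    linarith
  -- conclude
  intro x hx
  have hle : ν x ≤ 0 := by
    by_contra hcon
    push_neg at hcon
    have hφx := hφpos x
    have hε : 0 < ν x / (2 * φ x) := by positivity
    have := key _ hε x hx
    have : ν x ≤ ν x / 2 := by
      calc ν x ≤ ν x / (2 * φ x) * φ x := this
      _ = ν x / 2 := by field_simp
    linarith
  exact le_antisymm hle (hνnn x hx)
end
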